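/- Let G be a finite group and χ₁, …, χ_n irreducible characters of G with χ₁(1) = max_i χ_i(1). Then ⟨χ₁χ₂⋯χ_n, χ₁χ₂⋯χ_n⟩ ≤ χ₂(1)²⋯χ_n(1)², where ⟨·,·⟩ is the usual inner product of class functions. -/

import Mathlib

open scoped BigOperators

/-- `f : G → ℂ` is the character of some finite-dimensional complex representation of `G`. -/
def IsChar (G : Type) [Group G] (f : G → ℂ) : Prop :=
  ∃ V : FDRep ℂ G, V.character = f

/-- `f : G → ℂ` is the character of an irreducible finite-dimensional complex
representation of `G`. -/
def IsIrrChar (G : Type) [Group G] (f : G → ℂ) : Prop :=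
  ∃ V : FDRep ℂ G, CategoryTheory.Simple V ∧ V.character = f

/-- The standard inner product of class functions on a finite group. -/
noncomputable def cInner (G : Type) [Group G] [Fintype G] (f g : G → ℂ) : ℂ :=
  (Fintype.card G : ℂ)⁻¹ * ∑ x : G, f x * (starRingEnd ℂ) (g x)

/-- `|χ|`: the sum of the squares of the degrees of the distinct irreducible
constituents of `χ` (an irreducible character `f` is a constituent of `χ` iff
`⟨χ, f⟩ ≠ 0`). -/
noncomputable def charNorm (G : Type) [Group G] [Fintype G] (χ : G → ℂ) : ℝ :=
  ∑' f : {f : G → ℂ // IsIrrChar G f ∧ cInner G χ f ≠ 0}, Complex.normSq (f.1 1)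

/-! Writing `ψ = ∏ χᵢ`, we have `⟨ψ, ψ⟩ = |G|⁻¹ ∑ₓ |ψ(x)|²`, and `|χᵢ(x)| ≤ χᵢ(1)` bounds each
term by `|χᵢ₀(x)|² ∏_{i ≠ i₀} χᵢ(1)²`; orthonormality gives `∑ₓ |χᵢ₀(x)|² = |G|`.
Both facts about characters come from diagonalizing `ρ(x)`, which is possible because
`X ^ orderOf x - 1` is squarefree over `ℂ`: its eigenvalues are roots of unity, so they have
norm `1` and the eigenvalues of `ρ(x⁻¹)` are their conjugates. -/

open Module Polynomial ComplexConjugate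

theorem LinearMap.trace_eq_sum_of_apply_basis_eq_smul {R M ι : Type*} [CommRing R]
    [AddCommGroup M] [Module R M] [Fintype ι] [DecidableEq ι] (b : Basis ι R M)
    {f : M →ₗ[R] M} {μ : ι → R} (hf : ∀ i, f (b i) = μ i • b i) :
    LinearMap.trace R M f = ∑ i, μ i := by
  simp [LinearMap.trace_eq_matrix_trace R b, Matrix.trace, LinearMap.toMatrix_apply, hf]

namespace Module.End

variable {V : Type*} [AddCommGroup V] [Module ℂ V] [FiniteDimensional ℂ V]
  {f : End ℂ V} {k : ℕ}

theorem exists_eigenbasis_norm_eq_one_of_pow_eq_one (hk : k ≠ 0) (hf : f ^ k = 1) :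
    ∃ (ι : Type) (_ : Fintype ι) (b : Basis ι ℂ V) (μ : ι → ℂ),
      ∀ i, f (b i) = μ i • b i ∧ ‖μ i‖ = 1 := by
  have hss : f.IsSemisimple := by
    refine isSemisimple_of_squarefree_aeval_eq_zero
      (X_pow_sub_one_separable_iff.mpr (by exact_mod_cast hk)).squarefree ?_
    simp [hf]
  have hdecomp := DirectSum.isInternal_submodule_of_iSupIndep_of_iSup_eq_top
    f.eigenspaces_iSupIndep hss.iSup_eigenspace_eq_top
  let b := hdecomp.collectedBasis fun μ ↦ finBasis ℂ (f.eigenspace μ)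
  have hb (i) : f.HasEigenvector i.1 (b i) :=
    ⟨hdecomp.collectedBasis_mem _ i, b.ne_zero i⟩
  refine ⟨_, FiniteDimensional.fintypeBasisIndex b, b, Sigma.fst,
    fun i ↦ ⟨(hb i).apply_eq_smul, Complex.norm_eq_one_of_pow_eq_one ?_ hk⟩⟩
  have := (hb i).pow_apply k
  rw [hf, one_apply] at this
  exact smul_left_injective ℂ (b.ne_zero i) (by simpa using this.symm)

theorem norm_trace_le_finrank_of_pow_eq_one (hk : k ≠ 0) (hf : f ^ k = 1) :
    ‖LinearMap.trace ℂ V f‖ ≤ finrank ℂ V := by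
  classical
  obtain ⟨ι, _, b, μ, hμ⟩ := exists_eigenbasis_norm_eq_one_of_pow_eq_one hk hf
  rw [LinearMap.trace_eq_sum_of_apply_basis_eq_smul b fun i ↦ (hμ i).1, finrank_eq_card_basis b]
  calc ‖∑ i, μ i‖ ≤ ∑ i, ‖μ i‖ := norm_sum_le _ _
    _ = Fintype.card ι := by simp [fun i ↦ (hμ i).2]

theorem trace_eq_conj_trace_of_mul_eq_one (hk : k ≠ 0) (hf : f ^ k = 1) {g : End ℂ V}
    (hgf : g * f = 1) : LinearMap.trace ℂ V g = conj (LinearMap.trace ℂ V f) := by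
  classical
  obtain ⟨ι, _, b, μ, hμ⟩ := exists_eigenbasis_norm_eq_one_of_pow_eq_one hk hf
  have hg (i) : g (b i) = conj (μ i) • b i := by
    have hμ0 : μ i ≠ 0 := norm_ne_zero_iff.mp (by rw [(hμ i).2]; exact one_ne_zero)
    have := congr($hgf (b i))
    rw [mul_apply, (hμ i).1, map_smul, one_apply] at this
    conv_rhs => rw [← this]
    rw [smul_smul, ← Complex.inv_eq_conj (hμ i).2, inv_mul_cancel₀ hμ0, one_smul]
  rw [LinearMap.trace_eq_sum_of_apply_basis_eq_smul b fun i ↦ (hμ i).1,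
    LinearMap.trace_eq_sum_of_apply_basis_eq_smul b hg, map_sum]

end Module.End

namespace FDRep

variable {G : Type*} [Group G] (V : FDRep ℂ G) (g : G)

theorem ρ_pow_orderOf : V.ρ g ^ orderOf g = 1 := by
  rw [← map_pow, pow_orderOf_eq_one, map_one]

variable [Finite G]

theorem norm_character_le : ‖V.character g‖ ≤ finrank ℂ V :=
  End.norm_trace_le_finrank_of_pow_eq_one (orderOf_pos g).ne' (V.ρ_pow_orderOf g)

theorem character_inv : V.character g⁻¹ = conj (V.character g) :=
  End.trace_eq_conj_trace_of_mul_eq_one (orderOf_pos g).ne' (V.ρ_pow_orderOf g)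
    (by rw [← map_mul, inv_mul_cancel, map_one])

end FDRep

section

variable {G : Type} [Group G] {χ : G → ℂ}

theorem IsIrrChar.isChar (hχ : IsIrrChar G χ) : IsChar G χ :=
  let ⟨V, _, hV⟩ := hχ; ⟨V, hV⟩

theorem IsChar.normSq_apply_le [Finite G] (hχ : IsChar G χ) (x : G) :
    Complex.normSq (χ x) ≤ Complex.normSq (χ 1) := by
  obtain ⟨V, rfl⟩ := hχ
  rw [Complex.normSq_eq_norm_sq, Complex.normSq_eq_norm_sq, FDRep.char_one, Complex.norm_natCast]
  gcongr
  exact V.norm_character_le x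

variable [Fintype G]

theorem cInner_self_eq_ofReal (f : G → ℂ) :
    cInner G f f = ((Fintype.card G : ℝ)⁻¹ * ∑ x, Complex.normSq (f x) : ℝ) := by
  simp [cInner, Complex.mul_conj]

theorem IsIrrChar.cInner_self (hχ : IsIrrChar G χ) : cInner G χ χ = 1 := by
  obtain ⟨V, hV, rfl⟩ := hχ
  have : Invertible (Nat.card G : ℂ) := invertibleOfNonzero (by simp)
  have h := FDRep.char_orthonormal V V
  rw [if_pos ⟨CategoryTheory.Iso.refl V⟩] at h
  simpa [cInner, ← FDRep.character_inv] using h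

end

theorem stmt2_general {G : Type} [Group G] [Fintype G] (n : ℕ)
    (χ : Fin n → G → ℂ) (hirr : ∀ i, IsIrrChar G (χ i)) (i₀ : Fin n) :
    ‖cInner G (∏ i, χ i) (∏ i, χ i)‖ ≤
      ∏ i ∈ Finset.univ.erase i₀, Complex.normSq (χ i 1) := by
  have hpointwise (x : G) : Complex.normSq ((∏ i, χ i) x) ≤
      Complex.normSq (χ i₀ x) * ∏ i ∈ Finset.univ.erase i₀, Complex.normSq (χ i 1) := by
    rw [Finset.prod_apply, map_prod, ← Finset.mul_prod_erase _ _ (Finset.mem_univ i₀)]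
    exact mul_le_mul_of_nonneg_left (Finset.prod_le_prod (fun i _ ↦ Complex.normSq_nonneg _)
      fun i _ ↦ (hirr i).isChar.normSq_apply_le x) (Complex.normSq_nonneg _)
  have hi₀ : (Fintype.card G : ℝ)⁻¹ * ∑ x, Complex.normSq (χ i₀ x) = 1 := by
    exact_mod_cast (cInner_self_eq_ofReal (χ i₀)).symm.trans (hirr i₀).cInner_self
  rw [cInner_self_eq_ofReal, Complex.norm_of_nonneg
    (mul_nonneg (by positivity) (Finset.sum_nonneg fun x _ ↦ Complex.normSq_nonneg _))]
  calc (Fintype.card G : ℝ)⁻¹ * ∑ x, Complex.normSq ((∏ i, χ i) x)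
      ≤ (Fintype.card G : ℝ)⁻¹ * ∑ x, Complex.normSq (χ i₀ x) *
          ∏ i ∈ Finset.univ.erase i₀, Complex.normSq (χ i 1) := by
        gcongr with x
        exact hpointwise x
    _ = ∏ i ∈ Finset.univ.erase i₀, Complex.normSq (χ i 1) := by
        rw [← Finset.sum_mul, ← mul_assoc, hi₀, one_mul]

theorem stmt2 {G : Type} [Group G] [Fintype G] (n : ℕ) (hn : 2 ≤ n)
    (χ : Fin n → G → ℂ) (hirr : ∀ i, IsIrrChar G (χ i)) (i₀ : Fin n)
    (hmax : ∀ i, ‖χ i 1‖ ≤ ‖χ i₀ 1‖) :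
    ‖cInner G (∏ i, χ i) (∏ i, χ i)‖ ≤
      ∏ i ∈ Finset.univ.erase i₀, Complex.normSq (χ i 1) :=
  stmt2_general n χ hirr i₀
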